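/- For every real φ ≠ 0 one has 1/φ² − e^φ/(e^φ − 1)² > 0. Consequently h(φ) < 0 for all φ > 0 and h(φ) > 0 for all φ < 0, so (together with h(0) = 0) the point φ = 0 is the unique zero of h. -/
import Mathlib


/-- `h(φ) = −(φ/2)(1/φ² − e^φ/(e^φ − 1)²)` for `φ ≠ 0`, and `h(0) = 0`. -/
noncomputable def hFun (φ : ℝ) : ℝ :=
  if φ = 0 then 0
  else -(φ / 2) * (1 / φ ^ 2 - Real.exp φ / (Real.exp φ - 1) ^ 2)

lemma sq_lt_sinh_sq {x : ℝ} (hx : x ≠ 0) : x ^ 2 < Real.sinh x ^ 2 := by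
  rcases lt_or_gt_of_ne hx with h | h
  · have h1 := Real.self_lt_sinh_iff.mpr (show (0:ℝ) < -x by linarith)
    rw [Real.sinh_neg] at h1
    nlinarith
  · have h1 := Real.self_lt_sinh_iff.mpr h
    nlinarith

lemma key_ineq {φ : ℝ} (hφ : φ ≠ 0) :
    φ ^ 2 * Real.exp φ < (Real.exp φ - 1) ^ 2 := by
  have h2 : (Real.exp φ - 1) ^ 2 = Real.exp φ * (2 * Real.sinh (φ / 2)) ^ 2 := by
    rw [Real.sinh_eq]
    have h3 : Real.exp (φ / 2) * Real.exp (φ / 2) = Real.exp φ := by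
      rw [← Real.exp_add]; ring_nf
    have h4 : Real.exp (φ / 2) * Real.exp (-(φ / 2)) = 1 := by
      rw [← Real.exp_add]; simp
    nlinarith [Real.exp_pos (φ / 2), Real.exp_pos (-(φ / 2))]
  have h5 : (φ / 2) ^ 2 < Real.sinh (φ / 2) ^ 2 := sq_lt_sinh_sq (by
    intro h; apply hφ; linarith)
  nlinarith [Real.exp_pos φ]

lemma main_pos {φ : ℝ} (hφ : φ ≠ 0) :
    0 < 1 / φ ^ 2 - Real.exp φ / (Real.exp φ - 1) ^ 2 := by
  have hφ2 : 0 < φ ^ 2 := by positivity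
  have hne : Real.exp φ - 1 ≠ 0 := by
    intro h
    have : Real.exp φ = Real.exp 0 := by simpa using (by linarith : Real.exp φ = 1)
    exact hφ (Real.exp_injective this)
  have he2 : 0 < (Real.exp φ - 1) ^ 2 := by positivity
  rw [sub_pos, div_lt_div_iff₀ he2 hφ2]
  have := key_ineq hφ
  nlinarith

theorem stmt15 :
    (∀ φ : ℝ, φ ≠ 0 → 0 < 1 / φ ^ 2 - Real.exp φ / (Real.exp φ - 1) ^ 2) ∧
    (∀ φ : ℝ, 0 < φ → hFun φ < 0) ∧
    (∀ φ : ℝ, φ < 0 → 0 < hFun φ) ∧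
    (∀ φ : ℝ, hFun φ = 0 ↔ φ = 0) := by
  refine ⟨fun φ h => main_pos h, ?_, ?_, ?_⟩
  · intro φ h
    rw [hFun, if_neg (ne_of_gt h)]
    have := main_pos (ne_of_gt h)
    nlinarith
  · intro φ h
    rw [hFun, if_neg (ne_of_lt h)]
    have := main_pos (ne_of_lt h)
    nlinarith
  · intro φ
    constructor
    · intro h
      by_contra hne
      rw [hFun, if_neg hne] at h
      have hm := main_pos hne
      rcases lt_or_gt_of_ne hne with h' | h' <;> nlinarith
    · intro h; rw [h, hFun, if_pos rfl]
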